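/- Let f : ℝⁿ → ℝ be a multivariate quartic polynomial and let C := Σ_{i=1}^n ∇²f_{ii} (a constant symmetric n×n matrix), where f_{ii} := ∂²f/∂x_i². If C is not positive semidefinite, then for every x ∈ ℝⁿ there exists t̄ > 0 such that the matrix ∇²f(x) + (t̄²/6)·C (i.e., ∇_{xx}μ_f(x,t̄)) is not positive semidefinite. In particular there exist no t₀ > 0 and L > 0 such that μ_f(·,t) is convex on the closed Euclidean ball B[0,L] for all t > t₀. -/

import Mathlib

open MeasureTheory Matrix Filter

/-- Partial derivative of `f` in the `i`-th coordinate direction. -/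
noncomputable def pd {n : ℕ} (i : Fin n) (f : (Fin n → ℝ) → ℝ) : (Fin n → ℝ) → ℝ :=
  fun x => fderiv ℝ f x (Pi.single i 1)

/-- The gradient of `f` at `x`, as a vector of first partial derivatives. -/
noncomputable def grad {n : ℕ} (f : (Fin n → ℝ) → ℝ) (x : Fin n → ℝ) : Fin n → ℝ :=
  fun i => pd i f x

/-- The Hessian matrix of `f` at `x`, of second partial derivatives. -/
noncomputable def hess {n : ℕ} (f : (Fin n → ℝ) → ℝ) (x : Fin n → ℝ) :
    Matrix (Fin n) (Fin n) ℝ :=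
  Matrix.of fun i j => pd i (pd j f) x

/-- The Steklov function `μ_f(x,t) = (1/(2t)^n) ∫_{x-t}^{x+t} ⋯ ∫ f`. -/
noncomputable def steklov {n : ℕ} (f : (Fin n → ℝ) → ℝ) (x : Fin n → ℝ) (t : ℝ) : ℝ :=
  (1 / (2 * t) ^ n) * ∫ τ in Set.univ.pi (fun i => Set.Icc (x i - t) (x i + t)), f τ

/-- `f` is a multivariate quartic polynomial: a polynomial of total degree at most 4. -/
def IsMQP {n : ℕ} (f : (Fin n → ℝ) → ℝ) : Prop :=
  ∃ P : MvPolynomial (Fin n) ℝ, P.totalDegree ≤ 4 ∧ ∀ x, f x = MvPolynomial.eval x P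

/-- The closed Euclidean (ℓ₂) ball of radius `L` centered at `0` in `ℝⁿ`. -/
def ball2 {n : ℕ} (L : ℝ) : Set (Fin n → ℝ) := {y | ∑ i, (y i) ^ 2 ≤ L ^ 2}

/-- The Euclidean (ℓ₂) norm of a vector. -/
noncomputable def l2norm {m : ℕ} (v : Fin m → ℝ) : ℝ := Real.sqrt (∑ i, (v i) ^ 2)

/-!
Write `f = eval · p` with `p` of total degree at most 4. The matrix `C = ∑ᵢ ∇²(∂ᵢ²f)` is a sum
of Hessians of polynomials, hence symmetric, so `¬ C.PosSemidef` yields `v` with `vᵀCv < 0`, and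
then `vᵀ(∇²f(x) + t²/6 • C)v < 0` for large `t`.

For the Steklov function, translate the box to the centred cube `[-t,t]ⁿ`. By Taylor's formula
along the line `y + s•w`, the second difference `g(y) = f(y+w) + f(y-w) - 2f(y)` of a quartic
is a quadratic in `y`, with Laplacian `wᵀCw`; and the average of a quadratic over `[-t,t]ⁿ` is
its value at the centre plus `t²/6` times its Laplacian. Hence
`μ_f(w,t) + μ_f(-w,t) - 2μ_f(0,t) = g(0) + t²/6 · wᵀCw`, which is negative for large `t`,
whereas midpoint convexity on a ball containing `±w` makes it nonnegative.
-/

theorem eq_of_hasDerivAt_eq {f g f' : ℝ → ℝ} (hf : ∀ s, HasDerivAt f (f' s) s)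
    (hg : ∀ s, HasDerivAt g (f' s) s) (h₀ : f 0 = g 0) (s : ℝ) : f s = g s := by
  have hd : ∀ s, HasDerivAt (f - g) 0 s := fun s => by
    simpa only [sub_self] using (hf s).sub (hg s)
  have := is_const_of_deriv_eq_zero (fun s => (hd s).differentiableAt) (fun s => (hd s).deriv) s 0
  simp only [Pi.sub_apply] at this
  linarith

theorem hasDerivAt_sum_pow_div_factorial (c : ℕ → ℝ) (m : ℕ) (s : ℝ) :
    HasDerivAt (fun s => ∑ k ∈ Finset.range (m + 2), c k * s ^ k / k.factorial)
      (∑ k ∈ Finset.range (m + 1), c (k + 1) * s ^ k / k.factorial) s := by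
  have h : ∀ k ∈ Finset.range (m + 1),
      HasDerivAt (fun s => c (k + 1) * s ^ (k + 1) / (k + 1).factorial)
        (c (k + 1) * s ^ k / k.factorial) s := fun k _ => by
    refine (((hasDerivAt_pow (k + 1) s).const_mul (c (k + 1))).div_const _).congr_deriv ?_
    rw [Nat.factorial_succ]; push_cast; field_simp
  simp_rw [Finset.sum_range_succ' _ (m + 1)]
  simpa using (HasDerivAt.sum h).const_add (c 0)

theorem eq_sum_pow_div_factorial_of_hasDerivAt {φ : ℕ → ℝ → ℝ} (m : ℕ)
    (hφ : ∀ k s, HasDerivAt (φ k) (φ (k + 1) s) s) (hm : ∀ s, φ (m + 1) s = 0) (s : ℝ) :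
    φ 0 s = ∑ k ∈ Finset.range (m + 1), φ k 0 * s ^ k / k.factorial := by
  induction m generalizing φ s with
  | zero =>
    simpa using
      eq_of_hasDerivAt_eq (fun s => hm s ▸ hφ 0 s) (fun s => hasDerivAt_const s (φ 0 0)) rfl s
  | succ m ih =>
    have h₁ := ih (φ := fun k => φ (k + 1)) (fun k s => hφ (k + 1) s) hm
    refine eq_of_hasDerivAt_eq (f' := φ 1)
      (g := fun s => ∑ k ∈ Finset.range (m + 2), φ k 0 * s ^ k / k.factorial) (hφ 0)
      (fun s => ?_) ?_ s
    · rw [h₁ s]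
      exact hasDerivAt_sum_pow_div_factorial (fun k => φ k 0) m s
    · simp [Finset.sum_range_succ']

namespace MvPolynomial

section CommSemiring

variable {σ R : Type*} [CommSemiring R]

theorem totalDegree_pderiv_le (i : σ) (p : MvPolynomial σ R) :
    (pderiv i p).totalDegree ≤ p.totalDegree - 1 := by
  classical
  refine Finset.sup_le fun m hm => ?_
  rw [mem_support_iff, coeff_pderiv] at hm
  have hdeg := le_totalDegree (mem_support_iff.2 (left_ne_zero_of_mul hm))
  rw [Finsupp.sum_add_index' (fun _ => rfl) (fun _ _ _ => rfl), Finsupp.sum_single_index rfl]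
    at hdeg
  omega

theorem pderiv_pderiv_comm (i j : σ) (p : MvPolynomial σ R) :
    pderiv i (pderiv j p) = pderiv j (pderiv i p) := by
  classical
  induction p using MvPolynomial.induction_on with
  | C a => simp
  | add p q hp hq => simp [hp, hq]
  | mul_X p k hp =>
    have hX : ∀ a b : σ, pderiv a (pderiv b (X k : MvPolynomial σ R)) = 0 := fun a b => by
      rw [pderiv_X, Pi.single_apply]; split_ifs <;> simp
    simp only [pderiv_mul, map_add, hX, hp, mul_zero, add_zero]
    ring

theorem eval_eq_eval_of_totalDegree_eq_zero {p : MvPolynomial σ R} (hp : p.totalDegree = 0)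
    (x y : σ → R) : eval x p = eval y p := by
  rw [totalDegree_eq_zero_iff_eq_C.1 hp, eval_C, eval_C]

variable [Fintype σ]

noncomputable def dirDeriv (w : σ → R) (p : MvPolynomial σ R) : MvPolynomial σ R :=
  ∑ i, w i • pderiv i p

theorem eval_dirDeriv (w x : σ → R) (p : MvPolynomial σ R) :
    eval x (dirDeriv w p) = ∑ i, w i * eval x (pderiv i p) := by
  simp [dirDeriv, smul_eval]

theorem totalDegree_dirDeriv_le (w : σ → R) (p : MvPolynomial σ R) :
    (dirDeriv w p).totalDegree ≤ p.totalDegree - 1 :=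
  (totalDegree_finsetSum _ _).trans <| Finset.sup_le fun i _ =>
    (totalDegree_smul_le _ _).trans (totalDegree_pderiv_le i p)

theorem totalDegree_iterate_dirDeriv_le (w : σ → R) (p : MvPolynomial σ R) (k : ℕ) :
    ((dirDeriv w)^[k] p).totalDegree ≤ p.totalDegree - k := by
  induction k with
  | zero => simp
  | succ k ih =>
    rw [Function.iterate_succ_apply']
    exact (totalDegree_dirDeriv_le w _).trans (by omega)

theorem dirDeriv_eq_zero_of_totalDegree_eq_zero (w : σ → R) {p : MvPolynomial σ R}
    (hp : p.totalDegree = 0) : dirDeriv w p = 0 := by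
  rw [totalDegree_eq_zero_iff_eq_C.1 hp]
  simp [dirDeriv]

theorem pderiv_dirDeriv (i : σ) (w : σ → R) (p : MvPolynomial σ R) :
    pderiv i (dirDeriv w p) = dirDeriv w (pderiv i p) := by
  simp [dirDeriv, pderiv_pderiv_comm i]

end CommSemiring

variable {σ : Type*} [Fintype σ]

theorem hasFDerivAt_eval {𝕜 : Type*} [NontriviallyNormedField 𝕜] (p : MvPolynomial σ 𝕜)
    (x : σ → 𝕜) :
    HasFDerivAt (fun y => eval y p)
      (∑ i, eval x (pderiv i p) • ContinuousLinearMap.proj (R := 𝕜) (φ := fun _ => 𝕜) i) x := by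
  classical
  induction p using MvPolynomial.induction_on with
  | C a =>
    simp only [eval_C]
    exact (hasFDerivAt_const a x).congr_fderiv (by ext; simp)
  | add p q hp hq =>
    simp only [eval_add]
    exact (hp.add hq).congr_fderiv (by ext; simp [add_mul, Finset.sum_add_distrib])
  | mul_X p k hp =>
    simp only [eval_mul, eval_X]
    refine (hp.mul (hasFDerivAt_apply k x)).congr_fderiv ?_
    ext u
    simp [Pi.single_apply, add_mul, Finset.sum_add_distrib, Finset.mul_sum, apply_ite (eval x),
      mul_assoc]

theorem hasDerivAt_eval_add_smul {𝕜 : Type*} [NontriviallyNormedField 𝕜] (p : MvPolynomial σ 𝕜)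
    (x w : σ → 𝕜) (s : 𝕜) :
    HasDerivAt (fun s => eval (x + s • w) p) (eval (x + s • w) (dirDeriv w p)) s := by
  have hline : HasDerivAt (fun s : 𝕜 => x + s • w) w s := by
    simpa using ((hasDerivAt_id s).smul_const w).const_add x
  exact ((hasFDerivAt_eval p _).comp_hasDerivAt s hline).congr_deriv
    (by simp [eval_dirDeriv, mul_comm])

theorem eval_add_smul_eq_sum {p : MvPolynomial σ ℝ} {m : ℕ} (hp : p.totalDegree ≤ m)
    (x w : σ → ℝ) (s : ℝ) :
    eval (x + s • w) p
      = ∑ k ∈ Finset.range (m + 1), eval x ((dirDeriv w)^[k] p) * s ^ k / k.factorial := by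
  have hφ : ∀ k s, HasDerivAt (fun s => eval (x + s • w) ((dirDeriv w)^[k] p))
      (eval (x + s • w) ((dirDeriv w)^[k + 1] p)) s := fun k s => by
    rw [Function.iterate_succ_apply']
    exact hasDerivAt_eval_add_smul _ x w s
  have hm : (dirDeriv w)^[m + 1] p = 0 := by
    rw [Function.iterate_succ_apply']
    exact dirDeriv_eq_zero_of_totalDegree_eq_zero w
      (by have := totalDegree_iterate_dirDeriv_le w p m; omega)
  simpa using eq_sum_pow_div_factorial_of_hasDerivAt m hφ (by simp [hm]) s

theorem eval_add_add_eval_sub {p : MvPolynomial σ ℝ} (hp : p.totalDegree ≤ 4) (y w : σ → ℝ) :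
    eval (y + w) p + eval (y - w) p - 2 * eval y p
      = eval y ((dirDeriv w)^[2] p) + eval y ((dirDeriv w)^[4] p) / 12 := by
  have h₁ := eval_add_smul_eq_sum hp y w 1
  have hneg := eval_add_smul_eq_sum hp y w (-1)
  have h₀ := eval_add_smul_eq_sum hp y w 0
  rw [one_smul] at h₁
  rw [neg_one_smul, ← sub_eq_add_neg] at hneg
  rw [zero_smul, add_zero] at h₀
  rw [h₁, hneg, h₀]
  simp only [Finset.sum_range_succ, Finset.sum_range_zero, Nat.factorial]
  push_cast
  ring

theorem eval_add_of_totalDegree_le_two {p : MvPolynomial σ ℝ} (hp : p.totalDegree ≤ 2)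
    (x w : σ → ℝ) :
    eval (x + w) p = eval x p + eval x (dirDeriv w p) + eval x ((dirDeriv w)^[2] p) / 2 := by
  simpa [Finset.sum_range_succ] using eval_add_smul_eq_sum hp x w 1

end MvPolynomial

open MvPolynomial

theorem pd_eval {n : ℕ} (p : MvPolynomial (Fin n) ℝ) (i : Fin n) :
    pd i (fun y => eval y p) = fun y => eval y (pderiv i p) := by
  funext x
  simp [pd, (hasFDerivAt_eval p x).fderiv, Pi.single_apply]

theorem hess_eval {n : ℕ} (p : MvPolynomial (Fin n) ℝ) (x : Fin n → ℝ) :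
    hess (fun y => eval y p) x = Matrix.of fun i j => eval x (pderiv i (pderiv j p)) := by
  simp [hess, pd_eval]

theorem isHermitian_hess_eval {n : ℕ} (p : MvPolynomial (Fin n) ℝ) (x : Fin n → ℝ) :
    (hess (fun y => eval y p) x).IsHermitian := by
  ext i j
  simp [hess_eval, pderiv_pderiv_comm i j]

theorem isHermitian_sum_hess_pd_pd_eval {n : ℕ} (p : MvPolynomial (Fin n) ℝ) (x : Fin n → ℝ) :
    (∑ i, hess (pd i (pd i fun y => eval y p)) x).IsHermitian := by
  simp only [pd_eval]
  exact isSelfAdjoint_sum _ fun i _ => isHermitian_hess_eval _ x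

theorem eval_iterate_dirDeriv_two {n : ℕ} (p : MvPolynomial (Fin n) ℝ) (x w : Fin n → ℝ) :
    eval x ((dirDeriv w)^[2] p) = w ⬝ᵥ hess (fun y => eval y p) x *ᵥ w := by
  simp only [Function.iterate_succ_apply', Function.iterate_zero_apply, eval_dirDeriv,
    hess_eval, dotProduct, Matrix.mulVec, Matrix.of_apply, pderiv_dirDeriv,
    Finset.mul_sum]
  refine Finset.sum_congr rfl fun i _ => Finset.sum_congr rfl fun j _ => ?_
  rw [pderiv_pderiv_comm]
  ring

theorem trace_hess_eval_iterate_dirDeriv_two {n : ℕ} (p : MvPolynomial (Fin n) ℝ)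
    (x w : Fin n → ℝ) :
    (hess (fun y => eval y ((dirDeriv w)^[2] p)) x).trace
      = w ⬝ᵥ (∑ i, hess (pd i (pd i fun y => eval y p)) x) *ᵥ w := by
  simp only [Matrix.trace, Matrix.diag, Matrix.sum_mulVec, dotProduct_sum, pd_eval,
    ← eval_iterate_dirDeriv_two]
  simp [hess_eval, pderiv_dirDeriv]

section Cube

open Set

variable {ι : Type*} [Fintype ι]

def cube (ι : Type*) (t : ℝ) : Set (ι → ℝ) := univ.pi fun _ => Icc (-t) t

theorem Continuous.integrableOn_cube {f : (ι → ℝ) → ℝ} (hf : Continuous f) (t : ℝ) :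
    IntegrableOn f (cube ι t) :=
  hf.continuousOn.integrableOn_compact (isCompact_univ_pi fun _ => isCompact_Icc)

theorem integral_cube_prod (t : ℝ) (h : ι → ℝ → ℝ) :
    ∫ σ in cube ι t, ∏ i, h i (σ i) = ∏ i, ∫ s in Icc (-t) t, h i s := by
  rw [cube, volume_pi, Measure.restrict_pi_pi, integral_fintype_prod_eq_prod]

theorem integral_Icc_neg_self_one {t : ℝ} (ht : 0 ≤ t) : ∫ _ in Icc (-t) t, (1 : ℝ) = 2 * t := by
  rw [setIntegral_const, Real.volume_real_Icc_of_le (by linarith), smul_eq_mul, mul_one]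
  ring

theorem integral_Icc_neg_self_id (t : ℝ) : ∫ s in Icc (-t) t, s = 0 := by
  rcases le_or_gt (-t) t with h | h
  · rw [integral_Icc_eq_integral_Ioc, ← intervalIntegral.integral_of_le h, integral_id]
    ring
  · simp [Icc_eq_empty (not_le.2 h)]

theorem integral_Icc_neg_self_sq {t : ℝ} (ht : 0 ≤ t) :
    ∫ s in Icc (-t) t, s ^ 2 = 2 * t * (t ^ 2 / 3) := by
  rw [integral_Icc_eq_integral_Ioc, ← intervalIntegral.integral_of_le (by linarith), integral_pow]
  ring

theorem integral_cube_const {t : ℝ} (ht : 0 ≤ t) (a : ℝ) :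
    ∫ _ in cube ι t, a = (2 * t) ^ Fintype.card ι * a := by
  have h₁ : ∫ _ in cube ι t, (1 : ℝ) = (2 * t) ^ Fintype.card ι := by
    simpa [integral_Icc_neg_self_one ht] using integral_cube_prod (ι := ι) t fun _ _ => 1
  simpa [h₁, mul_comm] using integral_const_mul (μ := volume.restrict (cube ι t)) a fun _ => 1

theorem integral_cube_apply (t : ℝ) (k : ι) : ∫ σ in cube ι t, σ k = 0 := by
  classical
  have := integral_cube_prod t fun i s => if i = k then s else 1
  simp only [Finset.prod_ite_eq', Finset.mem_univ, if_true] at this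
  rw [this]
  exact Finset.prod_eq_zero (Finset.mem_univ k) (by simp [integral_Icc_neg_self_id])

theorem integral_cube_apply_mul_apply [DecidableEq ι] {t : ℝ} (ht : 0 ≤ t) (k l : ι) :
    ∫ σ in cube ι t, σ k * σ l = if k = l then (2 * t) ^ Fintype.card ι * (t ^ 2 / 3) else 0 := by
  have := integral_cube_prod t fun i s => (if i = k then s else 1) * (if i = l then s else 1)
  simp only [Finset.prod_mul_distrib, Finset.prod_ite_eq', Finset.mem_univ, if_true] at this
  rw [this]
  split_ifs with hkl
  · subst hkl
    have h : ∀ i, ∫ s in Icc (-t) t, (if i = k then s else 1) * (if i = k then s else 1)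
        = 2 * t * (if i = k then t ^ 2 / 3 else 1) := fun i => by
      split_ifs
      · simp_rw [← sq]; exact integral_Icc_neg_self_sq ht
      · simpa using integral_Icc_neg_self_one ht
    rw [Finset.prod_congr rfl fun i _ => h i, Finset.prod_mul_distrib]
    simp
  · refine Finset.prod_eq_zero (Finset.mem_univ k) ?_
    simp [hkl, integral_Icc_neg_self_id]

theorem integral_cube_dotProduct (t : ℝ) (b : ι → ℝ) : ∫ σ in cube ι t, σ ⬝ᵥ b = 0 := by
  have hi : ∀ i, Continuous fun σ : ι → ℝ => σ i * b i := fun i => by fun_prop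
  simp only [dotProduct]
  rw [integral_finsetSum _ fun i _ => (hi i).integrableOn_cube t]
  simp [integral_mul_const, integral_cube_apply]

theorem integral_cube_dotProduct_mulVec {t : ℝ} (ht : 0 ≤ t) (A : Matrix ι ι ℝ) :
    ∫ σ in cube ι t, σ ⬝ᵥ A *ᵥ σ = (2 * t) ^ Fintype.card ι * (t ^ 2 / 3) * A.trace := by
  classical
  have hA : ∀ σ : ι → ℝ, σ ⬝ᵥ A *ᵥ σ = ∑ i, ∑ j, A i j * (σ i * σ j) := fun σ => by
    simp only [dotProduct, Matrix.mulVec, Finset.mul_sum]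
    exact Finset.sum_congr rfl fun i _ => Finset.sum_congr rfl fun j _ => by ring
  have hij : ∀ i j, Continuous fun σ : ι → ℝ => A i j * (σ i * σ j) := fun i j => by fun_prop
  have hi : ∀ i, ∫ σ in cube ι t, ∑ j, A i j * (σ i * σ j)
      = (2 * t) ^ Fintype.card ι * (t ^ 2 / 3) * A i i := fun i => by
    rw [integral_finsetSum _ fun j _ => (hij i j).integrableOn_cube t]
    simp [integral_const_mul, integral_cube_apply_mul_apply ht, mul_comm]
  simp_rw [hA]
  rw [integral_finsetSum _ fun i _ =>
    (continuous_finsetSum _ fun j _ => hij i j).integrableOn_cube t]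
  simp [hi, Matrix.trace, Finset.mul_sum]

theorem integral_cube_quadratic {t : ℝ} (ht : 0 ≤ t) (a : ℝ) (b : ι → ℝ) (A : Matrix ι ι ℝ) :
    ∫ σ in cube ι t, (a + σ ⬝ᵥ b + σ ⬝ᵥ A *ᵥ σ / 2)
      = (2 * t) ^ Fintype.card ι * (a + t ^ 2 / 6 * A.trace) := by
  have hb : Continuous fun σ : ι → ℝ => σ ⬝ᵥ b := by fun_prop
  have hab : Continuous fun σ : ι → ℝ => a + σ ⬝ᵥ b := by fun_prop
  have hA : Continuous fun σ : ι → ℝ => σ ⬝ᵥ A *ᵥ σ / 2 := by fun_prop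
  rw [integral_add (hab.integrableOn_cube t) (hA.integrableOn_cube t),
    integral_add (continuous_const.integrableOn_cube t) (hb.integrableOn_cube t),
    integral_div, integral_cube_const ht, integral_cube_dotProduct,
    integral_cube_dotProduct_mulVec ht]
  ring

end Cube

theorem steklov_eq_integral_cube {n : ℕ} (f : (Fin n → ℝ) → ℝ) (x : Fin n → ℝ) (t : ℝ) :
    steklov f x t = 1 / (2 * t) ^ n * ∫ σ in cube (Fin n) t, f (x + σ) := by
  have hbox : (x + ·) ⁻¹' Set.univ.pi (fun i => Set.Icc (x i - t) (x i + t)) = cube (Fin n) t := by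
    ext σ
    simp only [cube, Set.mem_preimage, Set.mem_univ_pi, Set.mem_Icc, Pi.add_apply]
    exact forall_congr' fun i => by constructor <;> rintro ⟨h₁, h₂⟩ <;> constructor <;> linarith
  rw [steklov, ← (measurePreserving_add_left volume x).setIntegral_preimage_emb
    (measurableEmbedding_addLeft x), hbox]

theorem integral_cube_eval_of_totalDegree_le_two {n : ℕ} {p : MvPolynomial (Fin n) ℝ}
    (hp : p.totalDegree ≤ 2) {t : ℝ} (ht : 0 ≤ t) (x : Fin n → ℝ) :
    ∫ σ in cube (Fin n) t, eval (x + σ) p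
      = (2 * t) ^ n * (eval x p + t ^ 2 / 6 * (hess (fun y => eval y p) x).trace) := by
  have h : ∀ σ, eval (x + σ) p = eval x p + σ ⬝ᵥ (fun i => eval x (pderiv i p))
      + σ ⬝ᵥ hess (fun y => eval y p) x *ᵥ σ / 2 := fun σ => by
    rw [eval_add_of_totalDegree_le_two hp, eval_dirDeriv, eval_iterate_dirDeriv_two]
    rfl
  simp_rw [h]
  simpa using integral_cube_quadratic (ι := Fin n) ht (eval x p) _ _

theorem integral_cube_eval_add_add_eval_sub {n : ℕ} {p : MvPolynomial (Fin n) ℝ}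
    (hp : p.totalDegree ≤ 4) (x w : Fin n → ℝ) {t : ℝ} (ht : 0 ≤ t) :
    ∫ σ in cube (Fin n) t, (eval (x + w + σ) p + eval (x - w + σ) p - 2 * eval (x + σ) p)
      = (2 * t) ^ n * (eval (x + w) p + eval (x - w) p - 2 * eval x p
        + t ^ 2 / 6 * (w ⬝ᵥ (∑ i, hess (pd i (pd i fun y => eval y p)) x) *ᵥ w)) := by
  have hq : ((dirDeriv w)^[2] p).totalDegree ≤ 2 := by
    have := totalDegree_iterate_dirDeriv_le w p 2; omega
  have hc : ((dirDeriv w)^[4] p).totalDegree = 0 := by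
    have := totalDegree_iterate_dirDeriv_le w p 4; omega
  have hdiff : ∀ y, eval (y + w) p + eval (y - w) p - 2 * eval y p
      = eval y ((dirDeriv w)^[2] p) + eval x ((dirDeriv w)^[4] p) / 12 := fun y => by
    rw [eval_add_add_eval_sub hp, eval_eq_eval_of_totalDegree_eq_zero hc y x]
  have h : ∀ σ, eval (x + w + σ) p + eval (x - w + σ) p - 2 * eval (x + σ) p
      = eval (x + σ) ((dirDeriv w)^[2] p) + eval x ((dirDeriv w)^[4] p) / 12 := fun σ => by
    rw [add_right_comm, sub_add_eq_add_sub, hdiff]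
  have hint : IntegrableOn (fun σ => eval (x + σ) ((dirDeriv w)^[2] p)) (cube (Fin n) t) :=
    ((continuous_eval _).comp (continuous_const_add x)).integrableOn_cube t
  simp_rw [h]
  rw [integral_add hint (continuous_const.integrableOn_cube t),
    integral_cube_eval_of_totalDegree_le_two hq ht, integral_cube_const ht, Fintype.card_fin,
    hdiff x, trace_hess_eval_iterate_dirDeriv_two]
  ring

theorem steklov_add_add_steklov_sub {n : ℕ} {p : MvPolynomial (Fin n) ℝ}
    (hp : p.totalDegree ≤ 4) (x w : Fin n → ℝ) {t : ℝ} (ht : 0 < t) :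
    steklov (fun y => eval y p) (x + w) t + steklov (fun y => eval y p) (x - w) t
        - 2 * steklov (fun y => eval y p) x t
      = eval (x + w) p + eval (x - w) p - 2 * eval x p
        + t ^ 2 / 6 * (w ⬝ᵥ (∑ i, hess (pd i (pd i fun y => eval y p)) x) *ᵥ w) := by
  have hint : ∀ y, IntegrableOn (fun σ => eval (y + σ) p) (cube (Fin n) t) := fun y =>
    ((continuous_eval p).comp (continuous_const_add y)).integrableOn_cube t
  have hint₂ : IntegrableOn (fun σ => eval (x + w + σ) p + eval (x - w + σ) p) (cube (Fin n) t) :=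
    (hint _).add (hint _)
  have h := integral_cube_eval_add_add_eval_sub hp x w ht.le
  rw [integral_sub hint₂ ((hint x).const_mul 2), integral_add (hint _) (hint _),
    integral_const_mul] at h
  rw [steklov_eq_integral_cube, steklov_eq_integral_cube, steklov_eq_integral_cube]
  apply mul_left_cancel₀ (pow_ne_zero n (by positivity : 2 * t ≠ 0))
  rw [← h]
  field_simp

theorem Matrix.exists_dotProduct_mulVec_neg {ι : Type*} [Fintype ι] {A : Matrix ι ι ℝ}
    (hA : A.IsHermitian) (h : ¬A.PosSemidef) : ∃ v, v ⬝ᵥ A *ᵥ v < 0 := by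
  by_contra! hv
  exact h (.of_dotProduct_mulVec_nonneg hA fun v => by simpa using hv v)

theorem eventually_add_mul_neg (a : ℝ) {c : ℝ} (hc : c < 0) : ∀ᶠ s : ℝ in atTop, a + s * c < 0 :=
  (tendsto_atBot_add_const_left _ a (tendsto_id.atTop_mul_const_of_neg hc)).eventually_lt_atBot 0

theorem Matrix.eventually_not_posSemidef_add_smul {ι : Type*} [Fintype ι] (H : Matrix ι ι ℝ)
    {C : Matrix ι ι ℝ} {v : ι → ℝ} (hv : v ⬝ᵥ C *ᵥ v < 0) :
    ∀ᶠ s : ℝ in atTop, ¬(H + s • C).PosSemidef := by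
  filter_upwards [eventually_add_mul_neg (v ⬝ᵥ H *ᵥ v) hv] with s hs hpsd
  have := hpsd.dotProduct_mulVec_nonneg v
  simp only [star_trivial, add_mulVec, smul_mulVec, dotProduct_add, dotProduct_smul,
    smul_eq_mul] at this
  linarith

theorem ConvexOn.two_mul_apply_zero_le {E : Type*} [AddCommGroup E] [Module ℝ E] {s : Set E}
    {f : E → ℝ} (hf : ConvexOn ℝ s f) {w : E} (hw : w ∈ s) (hw' : -w ∈ s) :
    2 * f 0 ≤ f w + f (-w) := by
  have := hf.2 hw hw' (by norm_num : (0 : ℝ) ≤ 1 / 2) (by norm_num : (0 : ℝ) ≤ 1 / 2) (by norm_num)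
  rw [smul_neg, add_neg_cancel] at this
  simp only [smul_eq_mul] at this
  linarith

theorem eventually_not_convexOn_steklov {n : ℕ} {p : MvPolynomial (Fin n) ℝ}
    (hp : p.totalDegree ≤ 4) {s : Set (Fin n → ℝ)} {w : Fin n → ℝ} (hw : w ∈ s) (hw' : -w ∈ s)
    (hwC : w ⬝ᵥ (∑ i, hess (pd i (pd i fun y => eval y p)) 0) *ᵥ w < 0) :
    ∀ᶠ t in atTop, ¬ConvexOn ℝ s fun y => steklov (fun y => eval y p) y t := by
  have hsq : Tendsto (fun t : ℝ => t ^ 2 / 6) atTop atTop :=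
    (tendsto_pow_atTop two_ne_zero).atTop_div_const (by norm_num)
  filter_upwards [eventually_gt_atTop 0,
    hsq.eventually (eventually_add_mul_neg (eval w p + eval (-w) p - 2 * eval 0 p) hwC)]
    with t ht hneg hconv
  have hmid := hconv.two_mul_apply_zero_le hw hw'
  have hdiff := steklov_add_add_steklov_sub hp 0 w ht
  rw [zero_add, zero_sub] at hdiff
  linarith

theorem neg_mem_ball2 {n : ℕ} {L : ℝ} {y : Fin n → ℝ} (hy : y ∈ ball2 L) : -y ∈ ball2 L := by
  simpa [ball2] using hy

theorem exists_pos_smul_mem_ball2 {n : ℕ} (v : Fin n → ℝ) {L : ℝ} (hL : 0 < L) :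
    ∃ ε > (0 : ℝ), ε • v ∈ ball2 L := by
  set S := ∑ i, v i ^ 2
  have hS : 0 ≤ S := Finset.sum_nonneg fun i _ => sq_nonneg (v i)
  refine ⟨L / (S + 1), by positivity, ?_⟩
  simp only [ball2, Set.mem_ofPred_eq, Pi.smul_apply, smul_eq_mul, mul_pow, ← Finset.mul_sum]
  rw [div_pow, div_mul_eq_mul_div, div_le_iff₀ (by positivity)]
  nlinarith [mul_nonneg (sq_nonneg L) (sq_nonneg S), mul_nonneg (sq_nonneg L) hS]

/-- If `C := Σᵢ ∇²f_{ii}` is not positive semidefinite, then for every `x` there is `t̄ > 0`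
such that `∇²f(x) + (t̄²/6)·C` is not positive semidefinite; in particular there are no
`t₀ > 0` and `L > 0` such that `μ_f(·,t)` is convex on `B[0,L]` for all `t > t₀`. -/
theorem steklov_not_convexifiable {n : ℕ} (f : (Fin n → ℝ) → ℝ) (hf : IsMQP f)
    (C : Matrix (Fin n) (Fin n) ℝ)
    (hC : ∀ x : Fin n → ℝ, (∑ i, hess (pd i (pd i f)) x) = C)
    (hCnotPSD : ¬ C.PosSemidef) :
    (∀ x : Fin n → ℝ, ∃ tb > (0 : ℝ), ¬ (hess f x + (tb ^ 2 / 6) • C).PosSemidef)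
    ∧ ¬ ∃ t₀ > (0 : ℝ), ∃ L > (0 : ℝ), ∀ t > t₀,
        ConvexOn ℝ (ball2 L) (fun y => steklov f y t) := by
  obtain ⟨p, hp, hfp⟩ := hf
  obtain rfl : f = fun y => eval y p := funext hfp
  obtain ⟨v, hv⟩ := C.exists_dotProduct_mulVec_neg (hC 0 ▸ isHermitian_sum_hess_pd_pd_eval p 0)
    hCnotPSD
  have hsq : Tendsto (fun t : ℝ => t ^ 2 / 6) atTop atTop :=
    (tendsto_pow_atTop two_ne_zero).atTop_div_const (by norm_num)
  refine ⟨fun x => ?_, ?_⟩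
  · obtain ⟨t, ht, hnot⟩ := ((eventually_gt_atTop 0).and
      (hsq.eventually ((hess _ x).eventually_not_posSemidef_add_smul hv))).exists
    exact ⟨t, ht, hnot⟩
  · rintro ⟨t₀, -, L, hL, hconv⟩
    obtain ⟨ε, hε, hw⟩ := exists_pos_smul_mem_ball2 v hL
    have hwC : (ε • v) ⬝ᵥ C *ᵥ (ε • v) < 0 := by
      simpa [mulVec_smul, dotProduct_smul, smul_dotProduct, ← mul_assoc]
        using mul_neg_of_pos_of_neg (mul_pos hε hε) hv
    obtain ⟨t, hnot, ht₀⟩ := ((eventually_not_convexOn_steklov hp hw (neg_mem_ball2 hw)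
      (hC 0 ▸ hwC)).and (eventually_gt_atTop t₀)).exists
    exact hnot (hconv t ht₀)
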